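/- arXiv:2506.13311 — 5 statements merged into one kernel-verified Lean document; each statement's English description precedes it below -/
import Mathlib

section
/- Let G(x,y) = -(1/(2π))xy - (1/2)|x-y| + π/2 be the Green's function on [-π,π], let b ∈ (0,π), and let I = [b,π]. For all x, y ∈ I, writing x' = 2b - x and y' = 2b - y, we have G(x,y) + G(x',y) ≤ G(x,y') + G(x',y'). -/
open Real MeasureTheory Set

noncomputable def G (x y : ℝ) : ℝ := -(1 / (2 * π)) * x * y - (1 / 2) * |x - y| + π / 2

/- Reflection in `b` preserves distances, so the `|x - y|` parts of the four terms cancel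
(`|x' - y'| = |x - y|` and `|x - y'| = |x' - y|`); the bilinear parts leave
`-(x + x') (y - y') / (2π) = -2b (y - b) / π`. -/
theorem G_add_G_reflect_sub (b x y : ℝ) :
    G x y + G (2 * b - x) y - (G x (2 * b - y) + G (2 * b - x) (2 * b - y)) =
      -(2 * b * (y - b) / π) := by
  have h_cross : |x - (2 * b - y)| = |2 * b - x - y| := by
    rw [← abs_neg]; ring_nf
  have h_both : |2 * b - x - (2 * b - y)| = |x - y| := by
    rw [← abs_neg]; ring_nf
  unfold G
  rw [h_cross, h_both]
  field_simp
  ring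

theorem G_karamata_right_general (b : ℝ) (hb : b ∈ Ioo 0 π)
    (x y : ℝ) (hy : y ∈ Icc b π) :
    G x y + G (2 * b - x) y ≤ G x (2 * b - y) + G (2 * b - x) (2 * b - y) := by
  have h_gap : 0 ≤ 2 * b * (y - b) / π :=
    div_nonneg (mul_nonneg (by linarith [hb.1]) (sub_nonneg.2 hy.1)) pi_pos.le
  linarith [G_add_G_reflect_sub b x y]

theorem G_karamata_right (b : ℝ) (hb : b ∈ Ioo 0 π)
    (x y : ℝ) (hx : x ∈ Icc b π) (hy : y ∈ Icc b π) :
    G x y + G (2 * b - x) y ≤ G x (2 * b - y) + G (2 * b - x) (2 * b - y) :=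
  G_karamata_right_general b hb x y hy
end

section
/- Let G(x,y) = -(1/(2π))xy - (1/2)|x-y| + π/2, let b ∈ (0,π), and let x, y ∈ [b,π] with x' = 2b-x, y' = 2b-y. Then G(x,y) + G(x,y') ≤ G(x',y) + G(x',y'). -/
open Real MeasureTheory Set

/- Reflecting both arguments through `b` preserves `|x - y|` and swaps `|x - y'|` with `|x' - y|`,
so the kink terms cancel and only the bilinear part survives, where `y + y' = 2 b`. -/
theorem G_reflect_add_sub_G_add (b x y : ℝ) :
    (G (2 * b - x) y + G (2 * b - x) (2 * b - y)) - (G x y + G x (2 * b - y))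
      = 2 * b * (x - b) / π := by
  have h_cross : |x - (2 * b - y)| = |2 * b - x - y| := by
    rw [abs_sub_comm]; ring_nf
  have h_diag : |2 * b - x - (2 * b - y)| = |x - y| := by
    rw [abs_sub_comm]; ring_nf
  simp only [G, h_cross, h_diag]
  field_simp
  ring

theorem G_karamata_left_general (b : ℝ) (hb : b ∈ Ioo 0 π)
    (x y : ℝ) (hx : x ∈ Icc b π) :
    G x y + G x (2 * b - y) ≤ G (2 * b - x) y + G (2 * b - x) (2 * b - y) := by
  have h_nonneg : 0 ≤ 2 * b * (x - b) / π :=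
    div_nonneg (mul_nonneg (by linarith [hb.1]) (sub_nonneg.mpr hx.1)) pi_pos.le
  linarith [G_reflect_add_sub_G_add b x y]

theorem G_karamata_left (b : ℝ) (hb : b ∈ Ioo 0 π)
    (x y : ℝ) (hx : x ∈ Icc b π) (hy : y ∈ Icc b π) :
    G x y + G x (2 * b - y) ≤ G (2 * b - x) y + G (2 * b - x) (2 * b - y) :=
  G_karamata_left_general b hb x y hx
end

section
/- Let y₀ ∈ (-π,π) and G(x,y₀) = -(1/(2π))x·y₀ - (1/2)|x-y₀| + π/2. For every ψ ∈ C_c^∞(-π,π), ∫_{-π}^{π} G(x,y₀) ψ''(x) dx = -ψ(y₀); i.e., the second distributional derivative of G(·,y₀) is -δ_{y₀}. -/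
open Real MeasureTheory Set

lemma parts_aux (a b s t : ℝ) (ψ : ℝ → ℝ) (hψ : ContDiff ℝ (⊤ : ℕ∞) ψ) :
    ∫ x in s..t, (a * x + b) * deriv (deriv ψ) x
      = (a * t + b) * deriv ψ t - (a * s + b) * deriv ψ s - a * (ψ t - ψ s) := by
  have hψ1 : ContDiff ℝ (⊤ : ℕ∞) (deriv ψ) := (contDiff_infty_iff_deriv.mp hψ).2
  have hψ2 : Continuous (deriv (deriv ψ)) :=
    ((contDiff_infty_iff_deriv.mp hψ1).2).continuous
  have hu : ∀ x ∈ Set.uIcc s t, HasDerivAt (fun x => a * x + b) a x := by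
    intro x _
    simpa using ((hasDerivAt_id x).const_mul a).add_const b
  have hv : ∀ x ∈ Set.uIcc s t, HasDerivAt (deriv ψ) (deriv (deriv ψ) x) x :=
    fun x _ => (hψ1.differentiable (by norm_num) x).hasDerivAt
  have h := intervalIntegral.integral_mul_deriv_eq_deriv_mul hu hv
    ((continuous_const (y := a)).intervalIntegrable s t)
    (hψ2.intervalIntegrable s t)
  have hftc : ∫ x in s..t, deriv ψ x = ψ t - ψ s :=
    intervalIntegral.integral_deriv_eq_sub (fun x _ => hψ.differentiable (by norm_num) x)
      (hψ1.continuous.intervalIntegrable s t)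
  rw [h, intervalIntegral.integral_const_mul, hftc]

theorem G_second_distributional_derivative (y₀ : ℝ) (hy₀ : y₀ ∈ Ioo (-π) π)
    (ψ : ℝ → ℝ) (hψ : ContDiff ℝ (⊤ : ℕ∞) ψ) (hψc : HasCompactSupport ψ)
    (hψs : tsupport ψ ⊆ Ioo (-π) π) :
    ∫ x in (-π)..π, G x y₀ * deriv (deriv ψ) x = -ψ y₀ := by
  obtain ⟨hy1, hy2⟩ := hy₀
  have hπ := Real.pi_pos
  have hπ' : (π : ℝ) ≠ 0 := ne_of_gt hπ
  have hψ1 : ContDiff ℝ (⊤ : ℕ∞) (deriv ψ) := (contDiff_infty_iff_deriv.mp (hψ.of_le (by simp))).2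
  have hψ2 : Continuous (deriv (deriv ψ)) :=
    ((contDiff_infty_iff_deriv.mp hψ1).2).continuous
  have hts : tsupport (deriv ψ) ⊆ Ioo (-π) π :=
    (closure_minimal (support_deriv_subset) (isClosed_tsupport _)).trans hψs
  have hmem : ∀ z : ℝ, z = -π ∨ z = π → z ∉ Ioo (-π) π := by
    rintro z (rfl | rfl) hz
    · exact lt_irrefl _ hz.1
    · exact lt_irrefl _ hz.2
  have hψm : ψ (-π) = 0 :=
    image_eq_zero_of_notMem_tsupport (fun h => hmem _ (Or.inl rfl) (hψs h))
  have hψp : ψ π = 0 :=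
    image_eq_zero_of_notMem_tsupport (fun h => hmem _ (Or.inr rfl) (hψs h))
  have hdm : deriv ψ (-π) = 0 :=
    image_eq_zero_of_notMem_tsupport (fun h => hmem _ (Or.inl rfl) (hts h))
  have hdp : deriv ψ π = 0 :=
    image_eq_zero_of_notMem_tsupport (fun h => hmem _ (Or.inr rfl) (hts h))
  have hGc : Continuous fun x => G x y₀ := by
    unfold G
    exact (((continuous_const.mul continuous_id).mul continuous_const).sub
      (continuous_const.mul ((continuous_id.sub continuous_const).abs))).add continuous_const
  have hint : ∀ s t : ℝ, IntervalIntegrable (fun x => G x y₀ * deriv (deriv ψ) x)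
      volume s t := fun s t => (hGc.mul hψ2).intervalIntegrable s t
  rw [← intervalIntegral.integral_add_adjacent_intervals (hint (-π) y₀) (hint y₀ π)]
  have hL : ∫ x in (-π)..y₀, G x y₀ * deriv (deriv ψ) x
      = ∫ x in (-π)..y₀, ((1/2 - y₀/(2*π)) * x + (π/2 - y₀/2)) * deriv (deriv ψ) x := by
    refine intervalIntegral.integral_congr (fun x hx => ?_)
    rw [Set.uIcc_of_le hy1.le] at hx
    have hG : G x y₀ = (1/2 - y₀/(2*π)) * x + (π/2 - y₀/2) := by
      unfold G
      rw [abs_of_nonpos (by linarith [hx.2])]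
      field_simp
      ring
    rw [hG]
  have hR : ∫ x in y₀..π, G x y₀ * deriv (deriv ψ) x
      = ∫ x in y₀..π, ((-1/2 - y₀/(2*π)) * x + (π/2 + y₀/2)) * deriv (deriv ψ) x := by
    refine intervalIntegral.integral_congr (fun x hx => ?_)
    rw [Set.uIcc_of_le hy2.le] at hx
    have hG : G x y₀ = (-1/2 - y₀/(2*π)) * x + (π/2 + y₀/2) := by
      unfold G
      rw [abs_of_nonneg (by linarith [hx.1])]
      field_simp
      ring
    rw [hG]
  rw [hL, hR, parts_aux _ _ _ _ _ (hψ.of_le (by simp)), parts_aux _ _ _ _ _ (hψ.of_le (by simp)), hψm, hψp, hdm, hdp]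
  field_simp
  ring
end

section
/- For a, x₀ with a > 0 and x₀ ∈ (-π,π), the function u(x) = a·G(x,x₀) satisfies u(±π) = 0 and ∫_{-π}^{π} u(x)ψ''(x)dx = -a·ψ(x₀) for every ψ ∈ C_c^∞(-π,π); in particular u_{2πδ₀}(x) = π² - π|x|. -/
open Real MeasureTheory Set

lemma parts_linear (c d p q : ℝ) (ψ : ℝ → ℝ) (hψ : ContDiff ℝ (⊤ : ℕ∞) ψ) :
    ∫ x in p..q, (c * x + d) * deriv (deriv ψ) x
      = (c * q + d) * deriv ψ q - (c * p + d) * deriv ψ p - c * (ψ q - ψ p) := by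
  have hψ0 : ContDiff ℝ (⊤ : ℕ∞) ψ := hψ.of_le (by simp)
  have hψ1 : ContDiff ℝ (⊤ : ℕ∞) (deriv ψ) := (contDiff_infty_iff_deriv.mp hψ0).2
  have hψ2 : Continuous (deriv (deriv ψ)) := (contDiff_infty_iff_deriv.mp hψ1).2.continuous
  have hu : ∀ x ∈ uIcc p q, HasDerivAt (fun x => c * x + d) c x := by
    intro x _
    simpa using ((hasDerivAt_id x).const_mul c).add_const d
  have hv : ∀ x ∈ uIcc p q, HasDerivAt (deriv ψ) (deriv (deriv ψ) x) x := by
    intro x _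
    exact ((hψ1.differentiable (by simp)) x).hasDerivAt
  rw [intervalIntegral.integral_mul_deriv_eq_deriv_mul hu hv
      (continuous_const.intervalIntegrable _ _) (hψ2.intervalIntegrable _ _)]
  have : ∫ x in p..q, c * deriv ψ x = c * (ψ q - ψ p) := by
    rw [intervalIntegral.integral_const_mul,
      intervalIntegral.integral_deriv_eq_sub
        (fun x _ => (hψ0.differentiable (by simp)) x)
        ((hψ1.continuous).intervalIntegrable _ _)]
  rw [this]

lemma key_integral (x₀ : ℝ) (hx₀ : x₀ ∈ Ioo (-π) π) (ψ : ℝ → ℝ) (hψ : ContDiff ℝ (⊤ : ℕ∞) ψ)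
    (hsupp : tsupport ψ ⊆ Ioo (-π) π) :
    ∫ x in (-π)..π, G x x₀ * deriv (deriv ψ) x = -ψ x₀ := by
  obtain ⟨h1, h2⟩ := hx₀
  have hπm : (-π : ℝ) ∉ tsupport ψ := fun h => absurd (hsupp h).1 (by simp)
  have hπp : (π : ℝ) ∉ tsupport ψ := fun h => absurd (hsupp h).2 (by simp)
  have hψm : ψ (-π) = 0 := image_eq_zero_of_notMem_tsupport hπm
  have hψp : ψ π = 0 := image_eq_zero_of_notMem_tsupport hπp
  have hdm : deriv ψ (-π) = 0 := by
    by_contra h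
    exact hπm (support_deriv_subset (Function.mem_support.mpr h))
  have hdp : deriv ψ π = 0 := by
    by_contra h
    exact hπp (support_deriv_subset (Function.mem_support.mpr h))
  have hψ0 : ContDiff ℝ (⊤ : ℕ∞) ψ := hψ.of_le (by simp)
  have hψ1 : ContDiff ℝ (⊤ : ℕ∞) (deriv ψ) := (contDiff_infty_iff_deriv.mp hψ0).2
  have hψ2 : Continuous (deriv (deriv ψ)) := (contDiff_infty_iff_deriv.mp hψ1).2.continuous
  have hGc : Continuous (fun x => G x x₀) := by
    unfold G; fun_prop
  have hint1 : IntervalIntegrable (fun x => G x x₀ * deriv (deriv ψ) x) volume (-π) x₀ :=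
    (hGc.mul hψ2).intervalIntegrable _ _
  have hint2 : IntervalIntegrable (fun x => G x x₀ * deriv (deriv ψ) x) volume x₀ π :=
    (hGc.mul hψ2).intervalIntegrable _ _
  rw [← intervalIntegral.integral_add_adjacent_intervals hint1 hint2]
  have e1 : ∫ x in (-π)..x₀, G x x₀ * deriv (deriv ψ) x
      = ∫ x in (-π)..x₀, ((-(x₀ / (2 * π)) + 1 / 2) * x + (-(1 / 2) * x₀ + π / 2))
          * deriv (deriv ψ) x := by
    apply intervalIntegral.integral_congr
    intro x hx
    rw [uIcc_of_le (by linarith)] at hx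
    have hxle : x ≤ x₀ := hx.2
    simp only [G]
    rw [abs_of_nonpos (by linarith)]
    ring
  have e2 : ∫ x in x₀..π, G x x₀ * deriv (deriv ψ) x
      = ∫ x in x₀..π, ((-(x₀ / (2 * π)) - 1 / 2) * x + ((1 / 2) * x₀ + π / 2))
          * deriv (deriv ψ) x := by
    apply intervalIntegral.integral_congr
    intro x hx
    rw [uIcc_of_le (by linarith)] at hx
    have hxge : x₀ ≤ x := hx.1
    simp only [G]
    rw [abs_of_nonneg (by linarith)]
    ring
  rw [e1, e2, parts_linear _ _ _ _ _ hψ, parts_linear _ _ _ _ _ hψ,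
    hψm, hψp, hdm, hdp]
  ring

theorem u_dirac (a x₀ : ℝ) (ha : 0 < a) (hx₀ : x₀ ∈ Ioo (-π) π) :
    a * G (-π) x₀ = 0 ∧ a * G π x₀ = 0 ∧
    (∀ ψ : ℝ → ℝ, ContDiff ℝ (⊤ : ℕ∞) ψ → HasCompactSupport ψ →
        tsupport ψ ⊆ Ioo (-π) π →
        ∫ x in (-π)..π, a * G x x₀ * deriv (deriv ψ) x = -a * ψ x₀) ∧
    ∀ x ∈ Icc (-π) π, 2 * π * G x 0 = π ^ 2 - π * |x| := by
  obtain ⟨h1, h2⟩ := hx₀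
  have hπ : (π : ℝ) ≠ 0 := pi_ne_zero
  refine ⟨?_, ?_, ?_, ?_⟩
  · have : G (-π) x₀ = 0 := by
      simp only [G]
      rw [abs_of_nonpos (by linarith)]
      field_simp
      ring
    rw [this, mul_zero]
  · have : G π x₀ = 0 := by
      simp only [G]
      rw [abs_of_nonneg (by linarith)]
      field_simp
      ring
    rw [this, mul_zero]
  · intro ψ hc _ hs
    have hk := key_integral x₀ ⟨h1, h2⟩ ψ hc hs
    calc ∫ x in (-π)..π, a * G x x₀ * deriv (deriv ψ) x
        = ∫ x in (-π)..π, a * (G x x₀ * deriv (deriv ψ) x) := by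
          congr 1; ext x; ring
      _ = a * ∫ x in (-π)..π, G x x₀ * deriv (deriv ψ) x :=
          intervalIntegral.integral_const_mul _ _
      _ = -a * ψ x₀ := by rw [hk]; ring
  · intro x _
    simp only [G, mul_zero, sub_zero, zero_sub, mul_neg]
    field_simp
    ring
end

section
/- Let σ be a finite nonzero Borel measure on (-π,π) and suppose σ is not a point mass at 0 (i.e., there is ε₁ > 0 with σ((-π,π) \ (-ε₁,ε₁)) > 0). Then for every x₀ ∈ (-π,π), ∫ G(x₀,y) dσ(y) < G(0,0)·σ((-π,π)) = (π/2)·σ((-π,π)). -/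
open Real MeasureTheory Set

/-! Write `π / 2 - G x y = (π |x - y| + x y) / (2π)`. On `[-π, π]²` the numerator vanishes only at
the origin: for `x, y` of the same sign both terms are nonnegative, and for `x > 0 > y` it equals
`x (π + y) - π y > 0`. So the integrand is at most `π / 2` on `(-π, π)` and strictly below it on
the set of positive `σ`-mass that stays away from `0`. -/

lemma G_eq_sub (x y : ℝ) : G x y = π / 2 - (π * |x - y| + x * y) / (2 * π) := by
  unfold G
  field_simp
  ring

lemma continuous_G_right (x : ℝ) : Continuous (G x) := by
  unfold G
  fun_prop

lemma pi_mul_abs_sub_add_mul_pos {x y : ℝ} (hx : x ∈ Icc (-π) π) (hy : y ∈ Icc (-π) π)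
    (hxy : x ≠ 0 ∨ y ≠ 0) : 0 < π * |x - y| + x * y := by
  obtain ⟨hx₁, hx₂⟩ := hx
  obtain ⟨hy₁, hy₂⟩ := hy
  rcases hxy with h0 | h0 <;> rcases h0.lt_or_gt with h0 | h0 <;>
    rcases le_total 0 x with hx | hx <;> rcases le_total 0 y with hy | hy <;>
    rcases abs_cases (x - y) with ⟨h, h'⟩ | ⟨h, h'⟩ <;> rw [h] <;> nlinarith [pi_pos]

lemma pi_mul_abs_sub_add_mul_nonneg {x y : ℝ} (hx : x ∈ Icc (-π) π) (hy : y ∈ Icc (-π) π) :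
    0 ≤ π * |x - y| + x * y := by
  by_cases hxy : x ≠ 0 ∨ y ≠ 0
  · exact (pi_mul_abs_sub_add_mul_pos hx hy hxy).le
  · obtain ⟨rfl, rfl⟩ : x = 0 ∧ y = 0 := by simpa [not_or] using hxy
    simp

lemma G_le {x y : ℝ} (hx : x ∈ Icc (-π) π) (hy : y ∈ Icc (-π) π) : G x y ≤ π / 2 := by
  rw [G_eq_sub, sub_le_self_iff]
  exact div_nonneg (pi_mul_abs_sub_add_mul_nonneg hx hy) (by positivity)

lemma G_lt {x y : ℝ} (hx : x ∈ Icc (-π) π) (hy : y ∈ Icc (-π) π) (hxy : x ≠ 0 ∨ y ≠ 0) :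
    G x y < π / 2 := by
  rw [G_eq_sub, sub_lt_self_iff]
  exact div_pos (pi_mul_abs_sub_add_mul_pos hx hy hxy) (by positivity)

theorem MeasureTheory.setIntegral_lt_measureReal_mul {X : Type*} [MeasurableSpace X]
    {μ : Measure X} {s t : Set X} {f : X → ℝ} {c : ℝ} (hs : MeasurableSet s) (hμs : μ s ≠ ⊤)
    (hf : IntegrableOn f s μ) (hle : ∀ x ∈ s, f x ≤ c) (hts : t ⊆ s) (hlt : ∀ x ∈ t, f x < c)
    (ht : 0 < μ t) : ∫ x in s, f x ∂μ < μ.real s * c := by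
  have hgap_int : IntegrableOn (fun x => c - f x) s μ := (integrableOn_const hμs).sub hf
  have hgap_nonneg : 0 ≤ᵐ[μ.restrict s] fun x => c - f x :=
    ae_restrict_of_forall_mem hs fun x hx => sub_nonneg.2 (hle x hx)
  have hgap_pos : 0 < ∫ x in s, (c - f x) ∂μ := by
    rw [setIntegral_pos_iff_support_of_nonneg_ae hgap_nonneg hgap_int]
    refine ht.trans_le (measure_mono fun x hx => ⟨?_, hts hx⟩)
    exact (sub_pos.2 (hlt x hx)).ne'
  rw [integral_sub (integrableOn_const hμs (C := c)) hf, setIntegral_const, smul_eq_mul]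
    at hgap_pos
  linarith

theorem u_sigma_strict_general (σ : Measure ℝ) [IsFiniteMeasure σ]
    (ε₁ : ℝ) (hε₁ : 0 < ε₁) (hmass : 0 < σ (Ioo (-π) π \ Ioo (-ε₁) ε₁)) :
    ∀ x₀ ∈ Ioo (-π) π,
      (∫ y in Ioo (-π) π, G x₀ y ∂σ) < (π / 2) * (σ (Ioo (-π) π)).toReal := by
  intro x₀ hx₀
  have hG_int : IntegrableOn (G x₀) (Ioo (-π) π) σ :=
    ((continuous_G_right x₀).integrableOn_Icc).mono_set Ioo_subset_Icc_self
  have hy_ne : ∀ y ∈ Ioo (-π) π \ Ioo (-ε₁) ε₁, y ≠ 0 := by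
    rintro _ ⟨-, hy⟩ rfl
    exact hy ⟨neg_lt_zero.2 hε₁, hε₁⟩
  rw [mul_comm, ← measureReal_def]
  exact setIntegral_lt_measureReal_mul measurableSet_Ioo (measure_ne_top _ _) hG_int
    (fun y hy => G_le (Ioo_subset_Icc_self hx₀) (Ioo_subset_Icc_self hy)) sdiff_subset
    (fun y hy => G_lt (Ioo_subset_Icc_self hx₀) (Ioo_subset_Icc_self hy.1) (Or.inr (hy_ne y hy)))
    hmass

theorem u_sigma_strict (σ : Measure ℝ) [IsFiniteMeasure σ]
    (hsupp : σ (Ioo (-π) π)ᶜ = 0) (hσ : 0 < σ (Ioo (-π) π))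
    (ε₁ : ℝ) (hε₁ : 0 < ε₁) (hmass : 0 < σ (Ioo (-π) π \ Ioo (-ε₁) ε₁)) :
    ∀ x₀ ∈ Ioo (-π) π,
      (∫ y in Ioo (-π) π, G x₀ y ∂σ) < (π / 2) * (σ (Ioo (-π) π)).toReal :=
  u_sigma_strict_general σ ε₁ hε₁ hmass
end
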